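/- Explicitly, the Gaussian curvature above satisfies κ(t) = 4a² (1 − ζ(t)⁴) / (1 + (4a²+2)ζ(t)² + ζ(t)⁴)² for all t ≥ 0. -/

import Mathlib

/-!
With `ψ(s) = a log(1+s²)` one has `ψ' = 2as/(1+s²)` and `ψ'' = 2a(1-s²)/(1+s²)²`, and the
formula for `κ(t)` at `t > 0` is plain algebra once `ζ(t) ≠ 0`, using
`(1+z²)² + 4a²z² = 1 + (4a²+2)z² + z⁴`. Since the arc-length integrand `√(1+ψ'²)` is positive,
`∫₀^z √(1+ψ'²) = 0` forces `z = 0`; hence `ζ(0) = 0`, where the formula gives the convention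
`κ(0) = 4a²`, and `ζ(t) ≠ 0` for `t > 0`.
-/

open Real

theorem eq_of_intervalIntegral_eq_zero_of_pos {f : ℝ → ℝ} (hf : Continuous f)
    (hpos : ∀ x, 0 < f x) {a b : ℝ} (h : ∫ x in a..b, f x = 0) : a = b := by
  rcases lt_trichotomy a b with hab | hab | hab
  · exact absurd h (intervalIntegral.intervalIntegral_pos_of_pos
      (hf.intervalIntegrable a b) hpos hab).ne'
  · exact hab
  · rw [intervalIntegral.integral_symm, neg_eq_zero] at h
    exact absurd h (intervalIntegral.intervalIntegral_pos_of_pos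
      (hf.intervalIntegrable b a) hpos hab).ne'

section LogOneAddSq

variable (a : ℝ)

theorem hasDerivAt_const_mul_log_one_add_sq (s : ℝ) :
    HasDerivAt (fun s => a * log (1 + s ^ 2)) (2 * a * s / (1 + s ^ 2)) s := by
  have h := (((hasDerivAt_pow 2 s).const_add 1).log (by positivity)).const_mul a
  refine h.congr_deriv ?_
  field_simp
  ring

theorem deriv_const_mul_log_one_add_sq :
    deriv (fun s => a * log (1 + s ^ 2)) = fun s => 2 * a * s / (1 + s ^ 2) :=
  funext fun s => (hasDerivAt_const_mul_log_one_add_sq a s).deriv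

theorem hasDerivAt_mul_div_one_add_sq (s : ℝ) :
    HasDerivAt (fun s => 2 * a * s / (1 + s ^ 2)) (2 * a * (1 - s ^ 2) / (1 + s ^ 2) ^ 2) s := by
  have h := ((hasDerivAt_id s).const_mul (2 * a)).div ((hasDerivAt_pow 2 s).const_add 1)
    (by positivity : (1 + s ^ 2) ≠ 0)
  refine h.congr_deriv ?_
  simp only [id]
  field_simp
  ring

theorem deriv_mul_div_one_add_sq :
    deriv (fun s => 2 * a * s / (1 + s ^ 2)) = fun s => 2 * a * (1 - s ^ 2) / (1 + s ^ 2) ^ 2 :=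
  funext fun s => (hasDerivAt_mul_div_one_add_sq a s).deriv

theorem continuous_mul_div_one_add_sq : Continuous fun s : ℝ => 2 * a * s / (1 + s ^ 2) :=
  (continuous_const.mul continuous_id).div (continuous_const.add (continuous_pow 2))
    fun s => by positivity

theorem curvature_log_one_add_sq {z : ℝ} (hz : z ≠ 0) :
    2 * a * z / (1 + z ^ 2) * (2 * a * (1 - z ^ 2) / (1 + z ^ 2) ^ 2) /
        (z * (1 + (2 * a * z / (1 + z ^ 2)) ^ 2) ^ 2) =
      4 * a ^ 2 * (1 - z ^ 4) / (1 + (4 * a ^ 2 + 2) * z ^ 2 + z ^ 4) ^ 2 := by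
  have hD : 0 < 1 + (4 * a ^ 2 + 2) * z ^ 2 + z ^ 4 := by positivity
  field_simp
  ring

end LogOneAddSq

theorem stmt_19_general (a : ℝ)
    (ψ : ℝ → ℝ) (hψ : ∀ s, ψ s = a * Real.log (1 + s ^ 2))
    (ζ : ℝ → ℝ)
    (hζ : ∀ t ≥ (0:ℝ), t = ∫ s in (0:ℝ)..(ζ t), Real.sqrt (1 + deriv ψ s ^ 2))
    (κ : ℝ → ℝ)
    (hκ : ∀ t > (0:ℝ), κ t = deriv ψ (ζ t) * deriv (deriv ψ) (ζ t) /
      (ζ t * (1 + deriv ψ (ζ t) ^ 2) ^ 2))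
    (hκ0 : κ 0 = 4 * a ^ 2) :
    ∀ t ≥ (0:ℝ), κ t = 4 * a ^ 2 * (1 - ζ t ^ 4) /
      (1 + (4 * a ^ 2 + 2) * ζ t ^ 2 + ζ t ^ 4) ^ 2 := by
  have hψ' : deriv ψ = fun s => 2 * a * s / (1 + s ^ 2) := by
    rw [funext hψ, deriv_const_mul_log_one_add_sq]
  have hspeed_cont : Continuous fun s => √(1 + deriv ψ s ^ 2) := by
    rw [hψ']
    exact (continuous_const.add ((continuous_mul_div_one_add_sq a).pow 2)).sqrt
  have hspeed_pos : ∀ s, 0 < √(1 + deriv ψ s ^ 2) := fun s => sqrt_pos.2 (by positivity)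
  intro t ht
  rcases ht.eq_or_lt with rfl | htpos
  · have hζ0 : 0 = ζ 0 :=
      eq_of_intervalIntegral_eq_zero_of_pos hspeed_cont hspeed_pos (hζ 0 le_rfl).symm
    rw [← hζ0, hκ0]
    norm_num
  · have hζt : ζ t ≠ 0 := by
      intro h
      have := hζ t ht
      rw [h, intervalIntegral.integral_same] at this
      exact htpos.ne' this
    rw [hκ t htpos, hψ', deriv_mul_div_one_add_sq]
    exact curvature_log_one_add_sq a hζt

/-- for `ψ(s) = a log(1+s²)`, `a > 0`, the radial curvature satisfies
`κ(t) = 4a²(1 - ζ(t)⁴) / (1 + (4a²+2)ζ(t)² + ζ(t)⁴)²` for all `t ≥ 0`,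
with the convention `κ(0) = 4a²`. -/
theorem stmt_19 (a : ℝ) (ha : 0 < a)
    (ψ : ℝ → ℝ) (hψ : ∀ s, ψ s = a * Real.log (1 + s ^ 2))
    (ζ : ℝ → ℝ) (hζnn : ∀ t ≥ (0:ℝ), 0 ≤ ζ t)
    (hζ : ∀ t ≥ (0:ℝ), t = ∫ s in (0:ℝ)..(ζ t), Real.sqrt (1 + deriv ψ s ^ 2))
    (κ : ℝ → ℝ)
    (hκ : ∀ t > (0:ℝ), κ t = deriv ψ (ζ t) * deriv (deriv ψ) (ζ t) /
      (ζ t * (1 + deriv ψ (ζ t) ^ 2) ^ 2))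
    (hκ0 : κ 0 = 4 * a ^ 2) :
    ∀ t ≥ (0:ℝ), κ t = 4 * a ^ 2 * (1 - ζ t ^ 4) /
      (1 + (4 * a ^ 2 + 2) * ζ t ^ 2 + ζ t ^ 4) ^ 2 :=
  stmt_19_general a ψ hψ ζ hζ κ hκ hκ0
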